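/- arXiv:2101.08094 — 5 statements merged into one kernel-verified Lean document; each statement's English description precedes it below -/
import Mathlib

section
/- Let a, b, s, t, n be positive integers with a < s, s ≤ b, s ≤ t and n ≥ s - 1 + b. Then C(s-1,a)·C(n-s+1,b) ≤ ex(n, K_{a,b}, K_{s,t}) ≤ C(t-1,a)·C(n,b), where C(m,k) denotes the binomial coefficient. (In particular ex(n, K_{a,b}, K_{s,t}) = Θ(n^b).) -/
open SimpleGraph

/-- `F` is contained in `G` as a subgraph, i.e. there is an injective graph
homomorphism from `F` to `G`. -/
def ContainsCopy {α β : Type*} (F : SimpleGraph α) (G : SimpleGraph β) : Prop :=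
  ∃ f : F →g G, Function.Injective f

/-- `N(H,G)`: the number of subgraphs of `G` isomorphic to `H`. -/
noncomputable def copyCount {α β : Type*} (H : SimpleGraph α) (G : SimpleGraph β) : ℕ :=
  Nat.card {G' : G.Subgraph // Nonempty (H ≃g G'.coe)}

/-- `ex(n,H,F)`: the maximum number of copies of `H` in an `F`-free graph on `n` vertices. -/
noncomputable def exGen (n : ℕ) {α β : Type*} (H : SimpleGraph α) (F : SimpleGraph β) : ℕ :=
  sSup {m | ∃ G : SimpleGraph (Fin n), ¬ ContainsCopy F G ∧ m = copyCount H G}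

/-- The complete bipartite graph `K_{a,b}`. -/
abbrev Kbip (a b : ℕ) : SimpleGraph (Fin a ⊕ Fin b) := completeBipartiteGraph (Fin a) (Fin b)

/-- `K̄_{a,b}`: obtained from `K_{a,b}` by adding all edges inside the part of size `a`. -/
def KbipBar (a b : ℕ) : SimpleGraph (Fin a ⊕ Fin b) :=
  SimpleGraph.fromRel (fun u _ => u.isLeft)

/-- `k` vertex-disjoint copies of `G`. -/
def disjCopies (k : ℕ) {α : Type*} (G : SimpleGraph α) : SimpleGraph (Fin k × α) :=
  SimpleGraph.fromRel (fun u v => u.1 = v.1 ∧ G.Adj u.2 v.2)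

/-- The vertex-disjoint union of `G` and `H`. -/
def disjSum {α β : Type*} (G : SimpleGraph α) (H : SimpleGraph β) : SimpleGraph (α ⊕ β) :=
  SimpleGraph.fromRel (fun u v =>
    (∃ x y, u = Sum.inl x ∧ v = Sum.inl y ∧ G.Adj x y) ∨
    (∃ x y, u = Sum.inr x ∧ v = Sum.inr y ∧ H.Adj x y))

/-- Placing a graph `G0` on the `Fin b`-part of the vertex set `Fin a ⊕ Fin b`. -/
def liftRight (a : ℕ) {b : ℕ} (G0 : SimpleGraph (Fin b)) : SimpleGraph (Fin a ⊕ Fin b) :=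
  SimpleGraph.fromRel (fun u v => ∃ x y, u = Sum.inr x ∧ v = Sum.inr y ∧ G0.Adj x y)

/-!
A copy of `K_{a,b}` in `G` is exactly the subgraph of edges between two vertex sets `A`, `B` of
sizes `a`, `b` with `A` complete to `B`. If `G` is `K_{s,t}`-free and `|B| = b ≥ s`, the common
neighbourhood of `B` has fewer than `t` vertices, so each of the `C(n,b)` sets `B` admits at most
`C(t-1,a)` sets `A`. Conversely, the complete split graph with a clique `L` on `s - 1` vertices is
`K_{s,t}`-free: both sides of a `K_{s,t}` have more than `|L|` vertices, hence each contains a vertex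
outside `L`, and no two vertices outside `L` are adjacent. In it every `A ⊆ L`, `B ⊆ Lᶜ` of sizes
`a`, `b` spans a different copy of `K_{a,b}`.
-/

open Finset Fintype

theorem Set.range_eq_of_injective_of_card_eq {α γ : Type*} [Fintype γ] {g : γ → α}
    {C : Finset α} (hg : Function.Injective g) (hgC : ∀ x, g x ∈ C) (hC : #C = card γ) :
    Set.range g = C :=
  Set.eq_of_subset_of_ncard_le (Set.range_subset_iff.mpr hgC)
    (by rw [Set.ncard_coe_finset, Set.ncard_range_of_injective hg, hC, Nat.card_eq_fintype_card])

theorem Finset.exists_apply_notMem_of_card_lt {α γ : Type*} [Fintype γ] {g : γ → α}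
    {C : Finset α} (hg : Function.Injective g) (hC : #C < Fintype.card γ) : ∃ x, g x ∉ C := by
  by_contra! h
  have := card_le_card_of_injOn (s := univ) g (fun x _ => h x) hg.injOn
  rw [card_univ] at this
  omega

theorem containsCopy_iff_isContained {α β : Type*} {F : SimpleGraph α} {G : SimpleGraph β} :
    ContainsCopy F G ↔ F ⊑ G :=
  ⟨fun ⟨f, hf⟩ => ⟨⟨f, hf⟩⟩, fun ⟨f⟩ => ⟨f.toHom, f.injective⟩⟩

theorem copyCount_eq_ncard_range_toSubgraph {α β : Type*} (H : SimpleGraph α)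
    (G : SimpleGraph β) :
    copyCount H G = (Set.range (Copy.toSubgraph (A := H) (B := G))).ncard := by
  rw [Copy.range_toSubgraph]
  exact Nat.card_coe_set_eq _

namespace SimpleGraph

variable {V α β σ τ : Type*} {G : SimpleGraph V}

def betweenSubgraph (G : SimpleGraph V) (A B : Set V) : G.Subgraph where
  verts := A ∪ B
  Adj := (G.between A B).Adj
  adj_sub h := between_le h
  edge_vert := by rintro u v ⟨-, ⟨hu, -⟩ | ⟨hu, -⟩⟩ <;> simp [hu]
  symm := (G.between A B).symm

theorem toSubgraph_eq_betweenSubgraph (f : Copy (completeBipartiteGraph α β) G) :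
    f.toSubgraph = G.betweenSubgraph (Set.range (f ∘ Sum.inl)) (Set.range (f ∘ Sum.inr)) := by
  refine Subgraph.ext ?_ ?_
  · ext v
    simp [betweenSubgraph, Sum.exists]
  · ext u v
    simp only [Subgraph.map_adj, betweenSubgraph, between_adj, Set.mem_range, Function.comp_apply]
    constructor
    · rintro ⟨x, y, hxy, rfl, rfl⟩
      refine ⟨f.toHom.map_adj hxy, ?_⟩
      rcases x with x | x <;> rcases y with y | y <;> simp at hxy ⊢
    · rintro ⟨-, ⟨⟨x, rfl⟩, ⟨y, rfl⟩⟩ | ⟨⟨x, rfl⟩, ⟨y, rfl⟩⟩⟩ <;>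
        exact ⟨_, _, by simp, rfl, rfl⟩

variable [Fintype α] [Fintype β]

theorem exists_toSubgraph_eq_betweenSubgraph {A B : Finset V} (hA : #A = card α)
    (hB : #B = card β) (h : G.IsCompleteBetween A B) :
    ∃ f : Copy (completeBipartiteGraph α β) G, f.toSubgraph = G.betweenSubgraph A B := by
  set f := Copy.completeBipartiteGraph A B hA hB h
  have hl : Set.range (f ∘ Sum.inl) = A :=
    Set.range_eq_of_injective_of_card_eq (f.injective.comp Sum.inl_injective)
      (by simp [f, Copy.completeBipartiteGraph]) hA
  have hr : Set.range (f ∘ Sum.inr) = B :=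
    Set.range_eq_of_injective_of_card_eq (f.injective.comp Sum.inr_injective)
      (by simp [f, Copy.completeBipartiteGraph]) hB
  exact ⟨f, by rw [toSubgraph_eq_betweenSubgraph, hl, hr]⟩

theorem range_toSubgraph_completeBipartiteGraph :
    Set.range (Copy.toSubgraph (A := completeBipartiteGraph α β) (B := G)) =
      (fun p : Finset V × Finset V => G.betweenSubgraph p.1 p.2) ''
        {p | #p.1 = card α ∧ #p.2 = card β ∧ G.IsCompleteBetween p.1 p.2} := by
  refine subset_antisymm ?_ ?_
  · rintro _ ⟨f, rfl⟩
    refine ⟨(univ.map ⟨f ∘ Sum.inl, f.injective.comp Sum.inl_injective⟩,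
      univ.map ⟨f ∘ Sum.inr, f.injective.comp Sum.inr_injective⟩), ⟨by simp, by simp, ?_⟩, ?_⟩
    · rintro _ hu _ hv
      simp only [coe_map, coe_univ, Set.image_univ, Set.mem_range] at hu hv
      obtain ⟨x, rfl⟩ := hu
      obtain ⟨y, rfl⟩ := hv
      exact f.toHom.map_adj (by simp)
    · simp [toSubgraph_eq_betweenSubgraph, Function.comp_def]
  · rintro _ ⟨p, ⟨hA, hB, h⟩, rfl⟩
    exact exists_toSubgraph_eq_betweenSubgraph hA hB h

section UpperBound

variable [Fintype σ] [Fintype τ] [Fintype V]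

theorem card_filter_forall_adj_lt [DecidableRel G.Adj]
    (hG : (completeBipartiteGraph σ τ).Free G) {B : Finset V} (hB : card σ ≤ #B) :
    #{v | ∀ u ∈ B, G.Adj v u} < card τ := by
  by_contra! hN
  obtain ⟨T, hT, hTcard⟩ := exists_subset_card_eq hN
  obtain ⟨S, hS, hScard⟩ := exists_subset_card_eq hB
  refine hG (completeBipartiteGraph_isContained_iff.mpr ⟨S, T, hScard, hTcard, ?_⟩)
  intro u hu v hv
  exact ((mem_filter.mp (hT hv)).2 u (hS hu)).symm

theorem ncard_setOf_isCompleteBetween_le (hG : (completeBipartiteGraph σ τ).Free G) {a b : ℕ}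
    (hσ : card σ ≤ b) :
    {p : Finset V × Finset V | #p.1 = a ∧ #p.2 = b ∧ G.IsCompleteBetween p.1 p.2}.ncard ≤
      (card τ - 1).choose a * (card V).choose b := by
  classical
  set N : Finset V → Finset V := fun B => {v | ∀ u ∈ B, G.Adj v u}
  calc _ ≤ #((univ.powersetCard b).biUnion fun B => (N B).powersetCard a ×ˢ {B}) := by
        rw [← Set.ncard_coe_finset]
        refine Set.ncard_le_ncard ?_
        rintro ⟨A, B⟩ ⟨hA, hB, h⟩
        simp only [coe_biUnion, mem_coe, mem_powersetCard, subset_univ, true_and, Set.mem_iUnion,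
          coe_product, coe_singleton, Set.mem_prod, Set.mem_singleton_iff, exists_prop]
        exact ⟨B, hB, ⟨fun v hv => mem_filter.mpr ⟨mem_univ v, fun u hu => h hv hu⟩, hA⟩, rfl⟩
    _ ≤ ∑ B ∈ univ.powersetCard b, #((N B).powersetCard a ×ˢ {B}) := card_biUnion_le
    _ ≤ ∑ B ∈ univ.powersetCard b, (card τ - 1).choose a := by
        refine sum_le_sum fun B hB => ?_
        rw [card_product, card_singleton, mul_one, card_powersetCard]
        refine Nat.choose_le_choose a (Nat.le_sub_one_of_lt ?_)
        convert card_filter_forall_adj_lt hG (hσ.trans (mem_powersetCard.mp hB).2.ge)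
    _ = _ := by simp [mul_comm]

theorem copyCount_completeBipartiteGraph_le (hG : (completeBipartiteGraph σ τ).Free G)
    (hσ : card σ ≤ card β) :
    _root_.copyCount (completeBipartiteGraph α β) G ≤
      (card τ - 1).choose (card α) * (card V).choose (card β) := by
  rw [copyCount_eq_ncard_range_toSubgraph, range_toSubgraph_completeBipartiteGraph]
  exact (Set.ncard_image_le (Set.toFinite _)).trans (ncard_setOf_isCompleteBetween_le hG hσ)

end UpperBound

section LowerBound

/-- The clique on `L` joined completely to the independent set on `Lᶜ`. -/
def completeSplitGraph (L : Set V) : SimpleGraph V :=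
  SimpleGraph.fromRel fun u _ => u ∈ L

theorem completeSplitGraph_free [Fintype σ] [Fintype τ] {L : Finset V} (hσ : #L < card σ)
    (hτ : #L < card τ) : (completeBipartiteGraph σ τ).Free (completeSplitGraph (L : Set V)) := by
  rintro ⟨f⟩
  obtain ⟨x, hx⟩ := exists_apply_notMem_of_card_lt (f.injective.comp Sum.inl_injective) hσ
  obtain ⟨y, hy⟩ := exists_apply_notMem_of_card_lt (f.injective.comp Sum.inr_injective) hτ
  have : (completeSplitGraph (L : Set V)).Adj (f (.inl x)) (f (.inr y)) :=
    f.toHom.map_adj (by simp)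
  simp only [completeSplitGraph, fromRel_adj, mem_coe] at this
  exact this.2.elim hx hy

theorem isCompleteBetween_completeSplitGraph {L A B : Set V} (hA : A ⊆ L) (hB : Disjoint B L) :
    (completeSplitGraph L).IsCompleteBetween A B := by
  intro u hu v hv
  have hvL : v ∉ L := Set.disjoint_left.mp hB hv
  exact (fromRel_adj _ u v).mpr ⟨by rintro rfl; exact hvL (hA hu), Or.inl (hA hu)⟩

theorem betweenSubgraph_injOn [DecidableEq V] (L : Finset V) :
    Set.InjOn (fun p : Finset V × Finset V => G.betweenSubgraph p.1 p.2)
      {p | p.1 ⊆ L ∧ Disjoint p.2 L} := by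
  have hsplit : ∀ {A B : Finset V}, A ⊆ L → Disjoint B L →
      (A ∪ B) ∩ L = A ∧ (A ∪ B) \ L = B := by
    intro A B hA hB
    constructor <;> ext v <;> grind [Finset.disjoint_left]
  rintro ⟨A, B⟩ ⟨hAL, hBL⟩ ⟨A', B'⟩ ⟨hAL', hBL'⟩ h
  dsimp only at hAL hBL hAL' hBL' h
  have hU : A ∪ B = A' ∪ B' := by
    have : (↑A ∪ ↑B : Set V) = ↑A' ∪ ↑B' := congrArg Subgraph.verts h
    exact_mod_cast this
  obtain ⟨hA, hB⟩ := hsplit hAL hBL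
  obtain ⟨hA', hB'⟩ := hsplit hAL' hBL'
  rw [Prod.mk.injEq]
  constructor
  · rw [← hA, hU, hA']
  · rw [← hB, hU, hB']

theorem choose_mul_choose_le_copyCount_completeSplitGraph [Fintype V] [DecidableEq V]
    (L : Finset V) :
    (#L).choose (card α) * (#Lᶜ).choose (card β) ≤
      _root_.copyCount (completeBipartiteGraph α β) (completeSplitGraph (L : Set V)) := by
  set Q := L.powersetCard (card α) ×ˢ Lᶜ.powersetCard (card β)
  have hQ : ∀ p ∈ Q, (p.1 ⊆ L ∧ Disjoint p.2 L) ∧ #p.1 = card α ∧ #p.2 = card β := by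
    simp only [Q, mem_product, mem_powersetCard, subset_compl_iff_disjoint_right]
    tauto
  rw [copyCount_eq_ncard_range_toSubgraph, range_toSubgraph_completeBipartiteGraph]
  calc _ = #Q := by simp [Q, card_product, card_powersetCard]
    _ = ((fun p : Finset V × Finset V =>
          (completeSplitGraph (L : Set V)).betweenSubgraph p.1 p.2) '' Q).ncard := by
        rw [Set.InjOn.ncard_image, Set.ncard_coe_finset]
        exact (betweenSubgraph_injOn L).mono fun p hp => (hQ p hp).1
    _ ≤ _ := by
        refine Set.ncard_le_ncard (Set.image_mono fun p hp => ?_) (Set.toFinite _)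
        obtain ⟨⟨hAL, hBL⟩, hA, hB⟩ := hQ p hp
        exact ⟨hA, hB, isCompleteBetween_completeSplitGraph (coe_subset.mpr hAL)
          (disjoint_coe.mpr hBL)⟩

end LowerBound

end SimpleGraph

open SimpleGraph

theorem exGen_le {α β : Type*} {n M : ℕ} {H : SimpleGraph α} {F : SimpleGraph β}
    (h : ∀ G : SimpleGraph (Fin n), F.Free G → _root_.copyCount H G ≤ M) : exGen n H F ≤ M :=
  csSup_le' <| by
    rintro _ ⟨G, hG, rfl⟩
    exact h G (hG ∘ containsCopy_iff_isContained.mpr)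

theorem copyCount_le_exGen {α β : Type*} {n : ℕ} {H : SimpleGraph α} {F : SimpleGraph β}
    {G : SimpleGraph (Fin n)} (hG : F.Free G) : _root_.copyCount H G ≤ exGen n H F := by
  refine le_csSup ?_ ⟨G, hG ∘ containsCopy_iff_isContained.mp, rfl⟩
  refine (Set.finite_range fun G : SimpleGraph (Fin n) => _root_.copyCount H G).subset ?_
    |>.bddAbove
  rintro _ ⟨G, -, rfl⟩
  exact ⟨G, rfl⟩

theorem stmt0_general (a b s t n : ℕ) (hs : 0 < s) (hsb : s ≤ b) (hst : s ≤ t) (hsn : s - 1 + b ≤ n) :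
    Nat.choose (s - 1) a * Nat.choose (n - s + 1) b ≤ exGen n (Kbip a b) (Kbip s t) ∧
    exGen n (Kbip a b) (Kbip s t) ≤ Nat.choose (t - 1) a * Nat.choose n b := by
  obtain ⟨L, -, hL⟩ := exists_subset_card_eq (s := (univ : Finset (Fin n))) (n := s - 1)
    (by simp; omega)
  have hfree : (Kbip s t).Free (completeSplitGraph (L : Set (Fin n))) :=
    completeSplitGraph_free (by simp; omega) (by simp; omega)
  constructor
  · calc Nat.choose (s - 1) a * Nat.choose (n - s + 1) b
          = (#L).choose (card (Fin a)) * (#Lᶜ).choose (card (Fin b)) := by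
            simp only [card_compl, hL, Fintype.card_fin]
            congr 2
            omega
      _ ≤ _root_.copyCount (Kbip a b) (completeSplitGraph (L : Set (Fin n))) :=
          choose_mul_choose_le_copyCount_completeSplitGraph L
      _ ≤ exGen n (Kbip a b) (Kbip s t) := copyCount_le_exGen hfree
  · refine exGen_le fun G hG => ?_
    simpa using copyCount_completeBipartiteGraph_le (α := Fin a) (β := Fin b) hG
      (by simpa using hsb)

/-- if `a < s`, `s ≤ b`, `s ≤ t` and `n ≥ s - 1 + b`, then
`C(s-1,a)·C(n-s+1,b) ≤ ex(n, K_{a,b}, K_{s,t}) ≤ C(t-1,a)·C(n,b)`. -/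
theorem stmt0 (a b s t n : ℕ) (ha : 0 < a) (hb : 0 < b) (hs : 0 < s) (ht : 0 < t)
    (hn : 0 < n) (has : a < s) (hsb : s ≤ b) (hst : s ≤ t) (hsn : s - 1 + b ≤ n) :
    Nat.choose (s - 1) a * Nat.choose (n - s + 1) b ≤ exGen n (Kbip a b) (Kbip s t) ∧
    exGen n (Kbip a b) (Kbip s t) ≤ Nat.choose (t - 1) a * Nat.choose n b :=
  stmt0_general a b s t n hs hsb hst hsn
end

section
/- Let a, b, t be integers with 1 ≤ a < b < t. Then for every positive integer n, (a+b)·ex(n, K_{a,b}, K_{1,t}) ≤ n·(C(t-1,a)·C(t-1,b-1) + C(t-1,b)·C(t-1,a-1)), where C(m,k) denotes the binomial coefficient. -/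
open SimpleGraph

/-! In a `K_{1,t}`-free graph every degree is at most `t - 1`, and a copy of `K_{a,b}` is
determined by its pair of sides `(A, B)`. Count pairs (vertex `v`, copy through `v`): if `v ∈ A`
then `B` is a `b`-subset of `N(v)` and `A \ {v}` an `(a-1)`-subset of `N(u)` for any fixed `u ∈ B`,
so there are at most `C(t-1,b)·C(t-1,a-1)` such copies, and symmetrically for `v ∈ B`. Each copy
is counted `a + b` times. -/

open Finset

lemma Finset.sum_card_eq_sum_card_filter_mem {ι V : Type*} [Fintype V] [DecidableEq V]
    (P : Finset ι) (f : ι → Finset V) : ∑ i ∈ P, #(f i) = ∑ v, #{i ∈ P | v ∈ f i} := by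
  simpa only [bipartiteAbove, bipartiteBelow, filter_univ_mem] using
    sum_card_bipartiteAbove_eq_sum_card_bipartiteBelow (s := P) (t := univ)
      (r := fun i v => v ∈ f i)

namespace SimpleGraph

variable {V : Type*} {G : SimpleGraph V}

section Iso

variable {α : Type*} {H : SimpleGraph α} {s : G.Subgraph}

lemma Subgraph.verts_eq_range_of_iso (e : H ≃g s.coe) :
    s.verts = Set.range fun u => (e u : V) := by
  ext x
  refine ⟨fun hx => ⟨e.symm ⟨x, hx⟩, by simp⟩, ?_⟩
  rintro ⟨u, rfl⟩
  exact (e u).2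

lemma Subgraph.adj_iff_of_iso (e : H ≃g s.coe) {x y : V} :
    s.Adj x y ↔ ∃ u w, H.Adj u w ∧ (e u : V) = x ∧ (e w : V) = y := by
  constructor
  · intro h
    refine ⟨e.symm ⟨x, s.edge_vert h⟩, e.symm ⟨y, s.edge_vert h.symm⟩, ?_, by simp, by simp⟩
    rw [← e.map_rel_iff]
    simpa using h
  · rintro ⟨u, w, huw, rfl, rfl⟩
    exact e.map_rel_iff.2 huw

end Iso

lemma degree_le_of_not_containsCopy_star [Fintype V] [DecidableRel G.Adj] {t : ℕ}
    (h : ¬ ContainsCopy (Kbip 1 t) G) (v : V) : G.degree v ≤ t - 1 := by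
  by_contra! hlt
  obtain ⟨f⟩ : Nonempty (Fin t ↪ G.neighborSet v) := Function.Embedding.nonempty_of_card_le
    (by rw [Fintype.card_fin, card_neighborSet_eq_degree]; omega)
  have hadj (i : Fin t) : G.Adj v (f i) := (f i).2
  refine h ⟨⟨Sum.elim (fun _ => v) (fun i => f i), ?_⟩, ?_⟩
  · rintro (i | i) (j | j) hij
    · simp at hij
    · exact hadj j
    · exact (hadj i).symm
    · simp at hij
  · rintro (i | i) (j | j) hij
    · rw [Subsingleton.elim i j]
    · exact absurd hij (hadj j).ne
    · exact absurd hij.symm (hadj i).ne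
    · exact congrArg Sum.inr (f.injective (Subtype.ext hij))

variable [DecidableEq V] {a b d : ℕ}

section Kbip

variable {s s₁ s₂ : G.Subgraph}

def bicliqueOfIso (e : Kbip a b ≃g s.coe) : Finset V × Finset V :=
  (univ.image fun i => (e (.inl i) : V), univ.image fun j => (e (.inr j) : V))

lemma Subgraph.mem_verts_iff_of_iso_Kbip (e : Kbip a b ≃g s.coe) {x : V} :
    x ∈ s.verts ↔ x ∈ (bicliqueOfIso e).1 ∨ x ∈ (bicliqueOfIso e).2 := by
  simp [Subgraph.verts_eq_range_of_iso e, bicliqueOfIso]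

lemma Subgraph.adj_iff_of_iso_Kbip (e : Kbip a b ≃g s.coe) {x y : V} :
    s.Adj x y ↔ x ∈ (bicliqueOfIso e).1 ∧ y ∈ (bicliqueOfIso e).2 ∨
      x ∈ (bicliqueOfIso e).2 ∧ y ∈ (bicliqueOfIso e).1 := by
  simp [Subgraph.adj_iff_of_iso e, bicliqueOfIso]

lemma Subgraph.eq_of_bicliqueOfIso_eq (e₁ : Kbip a b ≃g s₁.coe) (e₂ : Kbip a b ≃g s₂.coe)
    (h : bicliqueOfIso e₁ = bicliqueOfIso e₂) : s₁ = s₂ := by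
  ext
  · rw [Subgraph.mem_verts_iff_of_iso_Kbip e₁, Subgraph.mem_verts_iff_of_iso_Kbip e₂, h]
  · rw [Subgraph.adj_iff_of_iso_Kbip e₁, Subgraph.adj_iff_of_iso_Kbip e₂, h]

end Kbip

variable [Fintype V] [DecidableRel G.Adj]

variable (G a b) in
def bicliques : Finset (Finset V × Finset V) :=
  {p ∈ univ.powersetCard a ×ˢ univ.powersetCard b | ∀ x ∈ p.1, ∀ y ∈ p.2, G.Adj x y}

lemma mem_bicliques {p : Finset V × Finset V} :
    p ∈ G.bicliques a b ↔ #p.1 = a ∧ #p.2 = b ∧ ∀ x ∈ p.1, ∀ y ∈ p.2, G.Adj x y := by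
  simp [bicliques, and_assoc]

lemma swap_mem_bicliques {p : Finset V × Finset V} :
    p.swap ∈ G.bicliques b a ↔ p ∈ G.bicliques a b := by
  simp only [mem_bicliques, Prod.fst_swap, Prod.snd_swap]
  constructor <;>
    exact fun ⟨h₁, h₂, h⟩ => ⟨h₂, h₁, fun x hx y hy => (h y hy x hx).symm⟩

lemma bicliqueOfIso_mem_bicliques {s : G.Subgraph} (e : Kbip a b ≃g s.coe) :
    bicliqueOfIso e ∈ G.bicliques a b := by
  have he : Function.Injective fun u => (e u : V) := fun _ _ h => e.injective (Subtype.ext h)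
  refine mem_bicliques.2 ⟨?_, ?_, ?_⟩
  · exact (card_image_of_injective univ (he.comp Sum.inl_injective)).trans (card_fin a)
  · exact (card_image_of_injective univ (he.comp Sum.inr_injective)).trans (card_fin b)
  · simp only [bicliqueOfIso, mem_image, mem_univ, true_and, forall_exists_index,
      forall_apply_eq_imp_iff]
    exact fun i j => s.adj_sub (e.map_rel_iff.2 (by simp))

lemma copyCount_Kbip_le_card_bicliques : _root_.copyCount (Kbip a b) G ≤ #(G.bicliques a b) := by
  rw [_root_.copyCount, ← Nat.card_eq_finsetCard]
  refine Nat.card_le_card_of_injective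
    (fun s : {s : G.Subgraph // Nonempty (Kbip a b ≃g s.coe)} =>
      (⟨bicliqueOfIso s.2.some, bicliqueOfIso_mem_bicliques _⟩ : G.bicliques a b))
    fun s₁ s₂ h => ?_
  exact Subtype.ext (Subgraph.eq_of_bicliqueOfIso_eq _ _ (congrArg Subtype.val h))

lemma card_filter_bicliques_snd_eq_le (hdeg : ∀ u, G.degree u ≤ d) {v u : V} {B : Finset V}
    (hu : u ∈ B) : #{p ∈ G.bicliques a b | v ∈ p.1 ∧ p.2 = B} ≤ d.choose (a - 1) := by
  calc #{p ∈ G.bicliques a b | v ∈ p.1 ∧ p.2 = B}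
      ≤ #((G.neighborFinset u).powersetCard (a - 1)) := by
        refine card_le_card_of_injOn (fun p => p.1.erase v) ?_ ?_
        · intro p hp
          rw [mem_coe, mem_filter, mem_bicliques] at hp
          obtain ⟨⟨hA, -, hadj⟩, hv, rfl⟩ := hp
          rw [mem_coe, mem_powersetCard, card_erase_of_mem hv, hA]
          refine ⟨fun x hx => ?_, rfl⟩
          exact (mem_neighborFinset _ _ _).2 (hadj x (mem_of_mem_erase hx) u hu).symm
        · intro p hp q hq hpq
          rw [mem_coe, mem_filter] at hp hq
          ext1
          · rw [← insert_erase hp.2.1, ← insert_erase hq.2.1]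
            exact congrArg (insert v) hpq
          · rw [hp.2.2, hq.2.2]
    _ ≤ d.choose (a - 1) := by
        rw [card_powersetCard, card_neighborFinset_eq_degree]
        exact Nat.choose_le_choose _ (hdeg u)

lemma card_filter_mem_fst_bicliques_le (hb : 1 ≤ b) (hdeg : ∀ u, G.degree u ≤ d) (v : V) :
    #{p ∈ G.bicliques a b | v ∈ p.1} ≤ d.choose b * d.choose (a - 1) := by
  have hmaps : ∀ p ∈ {p ∈ G.bicliques a b | v ∈ p.1},
      p.2 ∈ (G.neighborFinset v).powersetCard b := by
    intro p hp
    obtain ⟨⟨-, hB, hadj⟩, hv⟩ := by simpa only [mem_filter, mem_bicliques] using hp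
    exact mem_powersetCard.2 ⟨fun y hy => (mem_neighborFinset _ _ _).2 (hadj v hv y hy), hB⟩
  calc #{p ∈ G.bicliques a b | v ∈ p.1}
      ≤ d.choose (a - 1) * #((G.neighborFinset v).powersetCard b) := by
        refine card_le_mul_card_image_of_maps_to hmaps _ fun B hB => ?_
        obtain ⟨u, hu⟩ : B.Nonempty := card_pos.1 (by rw [(mem_powersetCard.1 hB).2]; omega)
        rw [filter_filter]
        exact card_filter_bicliques_snd_eq_le hdeg hu
    _ ≤ d.choose b * d.choose (a - 1) := by
        rw [card_powersetCard, card_neighborFinset_eq_degree, mul_comm]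
        exact Nat.mul_le_mul_right _ (Nat.choose_le_choose _ (hdeg v))

lemma card_filter_mem_snd_bicliques_le (ha : 1 ≤ a) (hdeg : ∀ u, G.degree u ≤ d) (v : V) :
    #{p ∈ G.bicliques a b | v ∈ p.2} ≤ d.choose a * d.choose (b - 1) := by
  calc #{p ∈ G.bicliques a b | v ∈ p.2} = #{p ∈ G.bicliques b a | v ∈ p.1} := by
        refine card_bij (fun p _ => p.swap) ?_ (fun _ _ _ _ h => Prod.swap_injective h) ?_
        · intro p hp
          simp only [mem_filter] at hp ⊢
          exact ⟨swap_mem_bicliques.2 hp.1, hp.2⟩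
        · intro p hp
          simp only [mem_filter] at hp
          exact ⟨p.swap, mem_filter.2 ⟨swap_mem_bicliques.2 hp.1, hp.2⟩, p.swap_swap⟩
    _ ≤ d.choose a * d.choose (b - 1) := card_filter_mem_fst_bicliques_le ha hdeg v

lemma add_mul_card_bicliques_le (ha : 1 ≤ a) (hb : 1 ≤ b) (hdeg : ∀ u, G.degree u ≤ d) :
    (a + b) * #(G.bicliques a b) ≤
      Fintype.card V * (d.choose a * d.choose (b - 1) + d.choose b * d.choose (a - 1)) := by
  calc (a + b) * #(G.bicliques a b) = ∑ p ∈ G.bicliques a b, (#p.2 + #p.1) := by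
        rw [mul_comm, ← smul_eq_mul, ← sum_const]
        refine sum_congr rfl fun p hp => ?_
        obtain ⟨hA, hB, -⟩ := mem_bicliques.1 hp
        rw [hA, hB, add_comm]
    _ = ∑ v, (#{p ∈ G.bicliques a b | v ∈ p.2} + #{p ∈ G.bicliques a b | v ∈ p.1}) := by
        rw [sum_add_distrib, sum_add_distrib, sum_card_eq_sum_card_filter_mem _ Prod.snd,
          sum_card_eq_sum_card_filter_mem _ Prod.fst]
    _ ≤ ∑ _v : V, (d.choose a * d.choose (b - 1) + d.choose b * d.choose (a - 1)) :=
        sum_le_sum fun v _ => add_le_add (card_filter_mem_snd_bicliques_le ha hdeg v)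
          (card_filter_mem_fst_bicliques_le hb hdeg v)
    _ = _ := by rw [sum_const, card_univ, smul_eq_mul]

end SimpleGraph

theorem stmt10_general (a b t : ℕ) (ha : 1 ≤ a) (hab : a < b) (n : ℕ) :
    (a + b) * exGen n (Kbip a b) (Kbip 1 t) ≤
      n * (Nat.choose (t - 1) a * Nat.choose (t - 1) (b - 1) +
        Nat.choose (t - 1) b * Nat.choose (t - 1) (a - 1)) := by
  classical
  refine (Nat.mul_le_mul_left _ (csSup_le' ?_)).trans (Nat.mul_div_le _ (a + b))
  rintro _ ⟨G, hG, rfl⟩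
  rw [Nat.le_div_iff_mul_le (by omega), mul_comm]
  calc (a + b) * _root_.copyCount (Kbip a b) G ≤ (a + b) * #(G.bicliques a b) :=
        Nat.mul_le_mul_left _ copyCount_Kbip_le_card_bicliques
    _ ≤ Fintype.card (Fin n) * _ :=
        add_mul_card_bicliques_le ha (by omega) (degree_le_of_not_containsCopy_star hG)
    _ = n * _ := by rw [Fintype.card_fin]

/-- if `1 ≤ a < b < t`, then for every positive `n`,
`(a+b)·ex(n, K_{a,b}, K_{1,t}) ≤ n·(C(t-1,a)·C(t-1,b-1) + C(t-1,b)·C(t-1,a-1))`. -/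
theorem stmt10 (a b t : ℕ) (ha : 1 ≤ a) (hab : a < b) (hbt : b < t) (n : ℕ) (hn : 0 < n) :
    (a + b) * exGen n (Kbip a b) (Kbip 1 t) ≤
      n * (Nat.choose (t - 1) a * Nat.choose (t - 1) (b - 1) +
        Nat.choose (t - 1) b * Nat.choose (t - 1) (a - 1)) :=
  stmt10_general a b t ha hab n
end

section
/- Let a, t be integers with 1 ≤ a < t. Then for every positive integer n, 2a·ex(n, K_{a,a}, K_{1,t}) ≤ n·C(t-1,a)·C(t-1,a-1), where C(m,k) denotes the binomial coefficient. -/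
open SimpleGraph

open Finset

/-! A `K_{1,t}`-free graph has maximum degree at most `t - 1`. Double count the pairs
(vertex `v`, copy of `K_{a,a}` through `v`): each copy has `2a` vertices, and a copy through `v`
is determined by its side `S` avoiding `v`, an `a`-subset of `N(v)`, together with the other
side minus `v`, an `(a - 1)`-subset of the common neighbourhood of `S`, which lies in `N(s)` for
any `s ∈ S`. -/

namespace SimpleGraph

variable {V : Type*} {G : SimpleGraph V}

def bipartiteSubgraph (G : SimpleGraph V) (L R : Finset V) : G.Subgraph where
  verts := ↑L ∪ ↑R
  Adj x y := G.Adj x y ∧ (x ∈ L ∧ y ∈ R ∨ x ∈ R ∧ y ∈ L)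
  adj_sub h := h.1
  edge_vert := by
    rintro x y ⟨-, ⟨hx, -⟩ | ⟨hx, -⟩⟩
    · exact Or.inl hx
    · exact Or.inr hx
  symm := ⟨fun _ _ ⟨h, hs⟩ => ⟨h.symm, hs.symm.imp And.symm And.symm⟩⟩

lemma bipartiteSubgraph_comm (L R : Finset V) :
    G.bipartiteSubgraph L R = G.bipartiteSubgraph R L := by
  ext <;> simp [bipartiteSubgraph, or_comm]

lemma exists_eq_bipartiteSubgraph_of_iso {α β : Type*} [Fintype α] [Fintype β]
    {G' : G.Subgraph} (e : completeBipartiteGraph α β ≃g G'.coe) :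
    ∃ L R : Finset V, #L = Fintype.card α ∧ #R = Fintype.card β ∧
      (∀ x ∈ L, ∀ y ∈ R, G.Adj x y) ∧ G' = G.bipartiteSubgraph L R := by
  classical
  set f := G'.hom.comp e.toHom
  have hf : Function.Injective f := Subgraph.hom_injective.comp e.injective
  have hG' : G' = Subgraph.map f ⊤ := by simp [f, Subgraph.map_comp]
  refine ⟨univ.image (f ∘ Sum.inl), univ.image (f ∘ Sum.inr), ?_, ?_, ?_, ?_⟩
  · rw [card_image_of_injective _ (hf.comp Sum.inl_injective), card_univ]
  · rw [card_image_of_injective _ (hf.comp Sum.inr_injective), card_univ]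
  · simp only [mem_image, mem_univ, true_and, Function.comp_apply]
    rintro _ ⟨i, rfl⟩ _ ⟨j, rfl⟩
    exact f.map_adj (by simp)
  · rw [hG']
    ext x y
    · simp [bipartiteSubgraph]
    · simp only [Subgraph.map_adj, bipartiteSubgraph, mem_image, mem_univ, true_and,
        Function.comp_apply]
      constructor
      · rintro ⟨p, q, hpq, rfl, rfl⟩
        refine ⟨f.map_adj hpq, ?_⟩
        rcases p with i | i <;> rcases q with j | j <;> simp_all
      · rintro ⟨-, ⟨⟨i, rfl⟩, j, rfl⟩ | ⟨⟨i, rfl⟩, j, rfl⟩⟩ <;> exact ⟨_, _, by simp, rfl, rfl⟩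

lemma degree_lt_of_not_containsCopy_Kbip_one [Fintype V] [DecidableRel G.Adj] {t : ℕ}
    (hG : ¬ ContainsCopy (Kbip 1 t) G) (v : V) : G.degree v < t := by
  by_contra! h
  obtain ⟨g⟩ : Nonempty (Fin t ↪ G.neighborSet v) :=
    Function.Embedding.nonempty_of_card_le (by rwa [card_neighborSet_eq_degree, Fintype.card_fin])
  refine hG ⟨⟨Sum.elim (fun _ => v) (fun i => g i), ?_⟩, ?_⟩
  · rintro (x | x) (y | y) hxy
    · simp at hxy
    · exact (g y).2
    · exact (g x).2.symm
    · simp at hxy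
  · exact (Function.injective_of_subsingleton _).sumElim
      (Subtype.val_injective.comp g.injective) fun _ i => (G.ne_of_adj (g i).2)

section Counting

variable [Fintype V] [DecidableRel G.Adj]

def commonNeighborFinset (G : SimpleGraph V) [DecidableRel G.Adj] (S : Finset V) : Finset V :=
  {w | ∀ s ∈ S, G.Adj s w}

lemma commonNeighborFinset_subset {S : Finset V} {s : V} (hs : s ∈ S) :
    G.commonNeighborFinset S ⊆ G.neighborFinset s := fun _ hw =>
  (mem_neighborFinset _ _ _).2 ((mem_filter.1 hw).2 s hs)

def bicliqueCodes (G : SimpleGraph V) [DecidableRel G.Adj] (v : V) (a : ℕ) :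
    Finset (Σ _ : Finset V, Finset V) :=
  ((G.neighborFinset v).powersetCard a).sigma fun S =>
    (G.commonNeighborFinset S).powersetCard (a - 1)

lemma card_bicliqueCodes_le {d : ℕ} (hdeg : ∀ w, G.degree w ≤ d) (v : V) (a : ℕ) :
    #(G.bicliqueCodes v a) ≤ d.choose a * d.choose (a - 1) := by
  have hT : ∀ S ∈ (G.neighborFinset v).powersetCard a,
      #((G.commonNeighborFinset S).powersetCard (a - 1)) ≤ d.choose (a - 1) := by
    intro S hS
    rw [card_powersetCard]
    rcases S.eq_empty_or_nonempty with rfl | ⟨s, hs⟩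
    · obtain rfl : a = 0 := by simpa [eq_comm] using (mem_powersetCard.1 hS).2
      simp
    · exact Nat.choose_le_choose _ ((card_le_card (commonNeighborFinset_subset hs)).trans
        (hdeg s))
  calc #(G.bicliqueCodes v a)
      = ∑ S ∈ (G.neighborFinset v).powersetCard a,
          #((G.commonNeighborFinset S).powersetCard (a - 1)) := card_sigma _ _
    _ ≤ #((G.neighborFinset v).powersetCard a) * d.choose (a - 1) := sum_le_card_nsmul _ _ _ hT
    _ ≤ d.choose a * d.choose (a - 1) := by
      rw [card_powersetCard, card_neighborFinset_eq_degree]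
      exact Nat.mul_le_mul_right _ (Nat.choose_le_choose _ (hdeg v))

lemma exists_mem_bicliqueCodes [DecidableEq V] {a : ℕ} {v : V} {L R : Finset V}
    (hL : #L = a) (hR : #R = a) (hLR : ∀ x ∈ L, ∀ y ∈ R, G.Adj x y) (hv : v ∈ L) :
    ∃ p ∈ G.bicliqueCodes v a,
      G.bipartiteSubgraph (insert v p.2) p.1 = G.bipartiteSubgraph L R := by
  refine ⟨⟨R, L.erase v⟩, mem_sigma.2 ⟨?_, ?_⟩, by rw [insert_erase hv]⟩
  · exact mem_powersetCard.2 ⟨fun y hy => (mem_neighborFinset _ _ _).2 (hLR v hv y hy), hR⟩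
  · refine mem_powersetCard.2 ⟨fun x hx => ?_, ?_⟩
    · simpa [commonNeighborFinset] using fun y hy => (hLR x (mem_of_mem_erase hx) y hy).symm
    · rw [card_erase_of_mem hv, hL]

lemma two_mul_copyCount_le {a d : ℕ} (hdeg : ∀ w, G.degree w ≤ d) :
    2 * a * _root_.copyCount (Kbip a a) G ≤ Fintype.card V * (d.choose a * d.choose (a - 1)) := by
  classical
  set copies : Finset G.Subgraph := {G' | Nonempty (Kbip a a ≃g G'.coe)}
  have hcount : _root_.copyCount (Kbip a a) G = #copies := by
    rw [_root_.copyCount, Nat.card_eq_fintype_card, Fintype.card_subtype]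
  have hverts : ∀ G' ∈ copies, 2 * a ≤ #(univ.bipartiteAbove (fun G' v => v ∈ G'.verts) G') := by
    intro G' hG'
    obtain ⟨e⟩ := (mem_filter.1 hG').2
    have hcard := Nat.card_congr e.toEquiv
    rw [Nat.card_eq_fintype_card, Nat.card_eq_fintype_card, Fintype.card_subtype] at hcard
    simp [bipartiteAbove, ← hcard, two_mul]
  have hthrough : ∀ v ∈ univ, #(copies.bipartiteBelow (fun G' v => v ∈ G'.verts) v) ≤
      d.choose a * d.choose (a - 1) := by
    intro v _
    refine (card_le_card_of_surjOn (fun p => G.bipartiteSubgraph (insert v p.2) p.1) ?_).trans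
      (card_bicliqueCodes_le hdeg v a)
    intro G' hG'
    obtain ⟨hcopy, hv⟩ := mem_filter.1 hG'
    obtain ⟨e⟩ := (mem_filter.1 hcopy).2
    obtain ⟨L, R, hL, hR, hLR, rfl⟩ := exists_eq_bipartiteSubgraph_of_iso e
    rw [Fintype.card_fin] at hL hR
    rcases hv with hv | hv
    · exact exists_mem_bicliqueCodes hL hR hLR hv
    · rw [bipartiteSubgraph_comm]
      exact exists_mem_bicliqueCodes hR hL (fun x hx y hy => (hLR y hy x hx).symm) hv
  rw [hcount, mul_comm]
  simpa using card_mul_le_card_mul _ hverts hthrough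

end Counting

end SimpleGraph

lemma mul_exGen_le {n k M : ℕ} {α β : Type*} {H : SimpleGraph α} {F : SimpleGraph β}
    (h : ∀ G : SimpleGraph (Fin n), ¬ ContainsCopy F G → k * _root_.copyCount H G ≤ M) :
    k * exGen n H F ≤ M := by
  rcases k.eq_zero_or_pos with rfl | hk
  · simp
  rw [mul_comm, ← Nat.le_div_iff_mul_le hk]
  refine csSup_le' ?_
  rintro _ ⟨G, hG, rfl⟩
  rw [Nat.le_div_iff_mul_le hk, mul_comm]
  exact h G hG

theorem stmt11_general (a t : ℕ) (n : ℕ) :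
    2 * a * exGen n (Kbip a a) (Kbip 1 t) ≤
      n * (Nat.choose (t - 1) a * Nat.choose (t - 1) (a - 1)) := by
  classical
  refine mul_exGen_le fun G hG => ?_
  have hdeg (v : Fin n) : G.degree v ≤ t - 1 :=
    Nat.le_sub_one_of_lt (degree_lt_of_not_containsCopy_Kbip_one hG v)
  simpa using two_mul_copyCount_le hdeg

/-- if `1 ≤ a < t`, then for every positive `n`,
`2a·ex(n, K_{a,a}, K_{1,t}) ≤ n·C(t-1,a)·C(t-1,a-1)`. -/
theorem stmt11 (a t : ℕ) (ha : 1 ≤ a) (hat : a < t) (n : ℕ) (hn : 0 < n) :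
    2 * a * exGen n (Kbip a a) (Kbip 1 t) ≤
      n * (Nat.choose (t - 1) a * Nat.choose (t - 1) (a - 1)) :=
  stmt11_general a t n
end

section
/- Let a, b, t be integers with 2 < a ≤ b < t. Let ℋ be an (a+b)-uniform hypergraph on a finite vertex set V that is linear and has girth at least 5 (i.e., it contains no Berge cycle of length 3 or 4). Let G be any graph obtained by placing a copy of K_{a,b} into every hyperedge of ℋ. Then G is K_{2,t}-free. -/
open SimpleGraph

/-- A hypergraph `H` (a family of finite sets of vertices) has a Berge cycle of length `k`:
`k` distinct vertices `v 0, …, v (k-1)` and `k` distinct hyperedges `h 0, …, h (k-1)` such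
that `v i, v (i+1) ∈ h i` (indices mod `k`). -/
def HasBergeCycle {V : Type*} (H : Set (Finset V)) (k : ℕ) : Prop :=
  ∃ (v : Fin k → V) (h : Fin k → Finset V),
    Function.Injective v ∧ Function.Injective h ∧ (∀ i, h i ∈ H) ∧
    ∀ i : Fin k, v i ∈ h i ∧ v ⟨(i.val + 1) % k, Nat.mod_lt _ i.pos⟩ ∈ h i


private lemma inj3' {α : Type*} {p q r : α} (h1 : p ≠ q) (h2 : p ≠ r) (h3 : q ≠ r) :
    Function.Injective ![p, q, r] := by
  intro i j h
  fin_cases i <;> fin_cases j <;> simp_all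

private lemma inj4' {α : Type*} {p q r s : α} (h1 : p ≠ q) (h2 : p ≠ r) (h3 : p ≠ s)
    (h4 : q ≠ r) (h5 : q ≠ s) (h6 : r ≠ s) :
    Function.Injective ![p, q, r, s] := by
  intro i j h
  fin_cases i <;> fin_cases j <;> simp_all

/-- let `2 < a ≤ b < t` and let `H` be an `(a+b)`-uniform linear hypergraph
with no Berge cycle of length 3 or 4 (girth at least 5). If `G` is obtained by placing a
copy of `K_{a,b}` into every hyperedge of `H`, then `G` is `K_{2,t}`-free. -/
theorem stmt15 {V : Type*} [Fintype V] [DecidableEq V] (a b t : ℕ)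
    (ha : 2 < a) (hab : a ≤ b) (hbt : b < t)
    (H : Set (Finset V)) (huniform : ∀ h ∈ H, h.card = a + b)
    (hlinear : ∀ h₁ ∈ H, ∀ h₂ ∈ H, h₁ ≠ h₂ → (h₁ ∩ h₂).card ≤ 1)
    (hC3 : ¬ HasBergeCycle H 3) (hC4 : ¬ HasBergeCycle H 4)
    (A B : Finset V → Finset V)
    (hpart : ∀ h ∈ H, A h ∪ B h = h ∧ Disjoint (A h) (B h) ∧
      (A h).card = a ∧ (B h).card = b)
    (G : SimpleGraph V)
    (hG : ∀ u v, G.Adj u v ↔ ∃ h ∈ H, (u ∈ A h ∧ v ∈ B h) ∨ (v ∈ A h ∧ u ∈ B h)) :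
    ¬ ContainsCopy (Kbip 2 t) G := by
  rintro ⟨f, hf⟩
  set x := f (Sum.inl 0) with hxdef
  set y := f (Sum.inl 1) with hydef
  set z : Fin t → V := fun j => f (Sum.inr j) with hzdef
  have hxy : x ≠ y := fun h => by simpa using hf h
  have hzinj : Function.Injective z := fun i j hij => by
    have := hf hij; simpa using this
  have hadjx : ∀ j, G.Adj x (z j) := fun j => f.map_adj (by simp)
  have hadjy : ∀ j, G.Adj y (z j) := fun j => f.map_adj (by simp)
  have hxz : ∀ j, x ≠ z j := fun j => (hadjx j).ne
  have hyz : ∀ j, y ≠ z j := fun j => (hadjy j).ne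
  -- uniqueness of hyperedge through two vertices
  have uniq : ∀ u v : V, u ≠ v → ∀ e₁ ∈ H, ∀ e₂ ∈ H,
      u ∈ e₁ → v ∈ e₁ → u ∈ e₂ → v ∈ e₂ → e₁ = e₂ := by
    intro u v huv e₁ h₁ e₂ h₂ hu1 hv1 hu2 hv2
    by_contra hne
    have hsub : ({u, v} : Finset V) ⊆ e₁ ∩ e₂ := by
      intro w hw
      simp only [Finset.mem_insert, Finset.mem_singleton] at hw
      rcases hw with rfl | rfl <;> simp [Finset.mem_inter, hu1, hv1, hu2, hv2]
    have hc := (Finset.card_le_card hsub).trans (hlinear e₁ h₁ e₂ h₂ hne)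
    rw [Finset.card_pair huv] at hc
    omega
  have memA : ∀ e ∈ H, A e ⊆ e := fun e he w hw =>
    (hpart e he).1 ▸ Finset.mem_union_left _ hw
  have memB : ∀ e ∈ H, B e ⊆ e := fun e he w hw =>
    (hpart e he).1 ▸ Finset.mem_union_right _ hw
  -- choose hyperedges
  have hexE : ∀ j : Fin t, ∃ e, e ∈ H ∧ ((x ∈ A e ∧ z j ∈ B e) ∨ (z j ∈ A e ∧ x ∈ B e)) :=
    fun j => by obtain ⟨e, he, hc⟩ := (hG x (z j)).1 (hadjx j); exact ⟨e, he, hc⟩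
  have heyE : ∀ j : Fin t, ∃ e, e ∈ H ∧ ((y ∈ A e ∧ z j ∈ B e) ∨ (z j ∈ A e ∧ y ∈ B e)) :=
    fun j => by obtain ⟨e, he, hc⟩ := (hG y (z j)).1 (hadjy j); exact ⟨e, he, hc⟩
  choose ex hexH hexC using hexE
  choose ey heyH heyC using heyE
  have hxex : ∀ j, x ∈ ex j := fun j => by
    rcases hexC j with ⟨h1, _⟩ | ⟨_, h2⟩
    · exact memA _ (hexH j) h1
    · exact memB _ (hexH j) h2
  have hzex : ∀ j, z j ∈ ex j := fun j => by
    rcases hexC j with ⟨_, h2⟩ | ⟨h1, _⟩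
    · exact memB _ (hexH j) h2
    · exact memA _ (hexH j) h1
  have hyey : ∀ j, y ∈ ey j := fun j => by
    rcases heyC j with ⟨h1, _⟩ | ⟨_, h2⟩
    · exact memA _ (heyH j) h1
    · exact memB _ (heyH j) h2
  have hzey : ∀ j, z j ∈ ey j := fun j => by
    rcases heyC j with ⟨_, h2⟩ | ⟨h1, _⟩
    · exact memB _ (heyH j) h2
    · exact memA _ (heyH j) h1
  by_cases hcase : ∃ e ∈ H, x ∈ e ∧ y ∈ e
  · -- Case A: some hyperedge contains x and y; find j with ex j ≠ ey j, get a Berge 3-cycle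
    obtain ⟨e0, he0, hxe0, hye0⟩ := hcase
    have hj : ∃ j, ex j ≠ ey j := by
      by_contra hall
      push_neg at hall
      have heq : ∀ j, ex j = e0 := fun j => by
        have hyin : y ∈ ex j := by rw [hall j]; exact hyey j
        exact uniq x y hxy _ (hexH j) _ he0 (hxex j) hyin hxe0 hye0
      have hxAB : x ∈ A e0 ∪ B e0 := by rw [(hpart e0 he0).1]; exact hxe0
      rcases Finset.mem_union.1 hxAB with hxA | hxB
      · -- all z j ∈ B e0
        have hzB : ∀ j, z j ∈ B e0 := fun j => by
          rcases (heq j) ▸ (hexC j) with ⟨_, h2⟩ | ⟨_, h2⟩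
          · exact h2
          · exact absurd hxA (Finset.disjoint_right.mp (hpart e0 he0).2.1 h2)
        have hsub : (Finset.univ.image z) ⊆ B e0 := fun w hw => by
          obtain ⟨j, _, rfl⟩ := Finset.mem_image.1 hw; exact hzB j
        have := Finset.card_le_card hsub
        rw [Finset.card_image_of_injective _ hzinj, Finset.card_univ,
          Fintype.card_fin, (hpart e0 he0).2.2.2] at this
        omega
      · have hzA : ∀ j, z j ∈ A e0 := fun j => by
          rcases (heq j) ▸ (hexC j) with ⟨h1, _⟩ | ⟨h1, _⟩
          · exact absurd hxB (Finset.disjoint_left.mp (hpart e0 he0).2.1 h1)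
          · exact h1
        have hsub : (Finset.univ.image z) ⊆ A e0 := fun w hw => by
          obtain ⟨j, _, rfl⟩ := Finset.mem_image.1 hw; exact hzA j
        have := Finset.card_le_card hsub
        rw [Finset.card_image_of_injective _ hzinj, Finset.card_univ,
          Fintype.card_fin, (hpart e0 he0).2.2.1] at this
        omega
    obtain ⟨j, hjne⟩ := hj
    have he1ne0 : ex j ≠ e0 := by
      intro h
      have hyin : y ∈ ex j := by rw [h]; exact hye0
      exact hjne (uniq (z j) y (hyz j).symm _ (hexH j) _ (heyH j) (hzex j)
        hyin (hzey j) (hyey j))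
    have he2ne0 : ey j ≠ e0 := by
      intro h
      have hxin : x ∈ ey j := by rw [h]; exact hxe0
      exact hjne (uniq (z j) x (hxz j).symm _ (hexH j) _ (heyH j) (hzex j)
        (hxex j) (hzey j) hxin)
    apply hC3
    refine ⟨![x, z j, y], ![ex j, ey j, e0], inj3' (hxz j) hxy (hyz j).symm,
      inj3' hjne he1ne0 he2ne0, ?_, ?_⟩
    · intro i
      fin_cases i
      · exact hexH j
      · exact heyH j
      · exact he0
    · intro i
      fin_cases i
      · exact ⟨hxex j, hzex j⟩
      · exact ⟨hzey j, hyey j⟩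
      · exact ⟨hye0, hxe0⟩
  · -- Case B: no hyperedge contains both x and y; get a Berge 4-cycle
    push_neg at hcase
    have hnexy : ∀ e ∈ H, x ∈ e → y ∈ e → False := fun e he hx hy => hcase e he hx hy
    have hne : ∀ j, ex j ≠ ey j := fun j h =>
      hnexy _ (hexH j) (hxex j) (h ▸ hyey j)
    have ht2 : 1 < t := by omega
    set j0 : Fin t := ⟨0, by omega⟩ with hj0
    set j1 : Fin t := ⟨1, by omega⟩ with hj1
    have hj01 : j0 ≠ j1 := by simp [hj0, hj1, Fin.ext_iff]
    have hz01 : z j0 ≠ z j1 := fun h => hj01 (hzinj h)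
    have h12 : ex j0 ≠ ey j0 := hne j0
    have h34 : ey j1 ≠ ex j1 := (hne j1).symm
    have h13 : ex j0 ≠ ey j1 := fun h =>
      hnexy _ (hexH j0) (hxex j0) (by rw [h]; exact hyey j1)
    have h24 : ey j0 ≠ ex j1 := fun h =>
      hnexy _ (heyH j0) (by rw [h]; exact hxex j1) (hyey j0)
    have h14 : ex j0 ≠ ex j1 := by
      intro h
      -- e1 contains x, z j0, z j1 : build 3-cycle z j0, y, z j1 with e2, e3, e1
      have hz1e1 : z j1 ∈ ex j0 := by rw [h]; exact hzex j1
      have h23 : ey j0 ≠ ey j1 := by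
        intro h'
        have hz1e2 : z j1 ∈ ey j0 := by rw [h']; exact hzey j1
        exact h12 (uniq (z j0) (z j1) hz01 _ (hexH j0) _ (heyH j0)
          (hzex j0) hz1e1 (hzey j0) hz1e2)
      apply hC3
      refine ⟨![z j0, y, z j1], ![ey j0, ey j1, ex j0], inj3' (hyz j0).symm hz01 (hyz j1),
        inj3' h23 h12.symm h13.symm, ?_, ?_⟩
      · intro i; fin_cases i
        · exact heyH j0
        · exact heyH j1
        · exact hexH j0
      · intro i; fin_cases i
        · exact ⟨hzey j0, hyey j0⟩
        · exact ⟨hyey j1, hzey j1⟩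
        · exact ⟨hz1e1, hzex j0⟩
    have h23 : ey j0 ≠ ey j1 := by
      intro h
      -- ey j0 contains y, z j0, z j1 : build 3-cycle z j0, x, z j1
      have hz1e2 : z j1 ∈ ey j0 := by rw [h]; exact hzey j1
      apply hC3
      refine ⟨![z j0, x, z j1], ![ex j0, ex j1, ey j0], inj3' (hxz j0).symm hz01 (hxz j1),
        inj3' h14 h12 h24.symm, ?_, ?_⟩
      · intro i; fin_cases i
        · exact hexH j0
        · exact hexH j1
        · exact heyH j0
      · intro i; fin_cases i
        · exact ⟨hzex j0, hxex j0⟩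
        · exact ⟨hxex j1, hzex j1⟩
        · exact ⟨hz1e2, hzey j0⟩
    apply hC4
    refine ⟨![x, z j0, y, z j1], ![ex j0, ey j0, ey j1, ex j1],
      inj4' (hxz j0) hxy (hxz j1) (hyz j0).symm hz01 (hyz j1),
      inj4' h12 h13 h14 h23 h24 h34, ?_, ?_⟩
    · intro i; fin_cases i
      · exact hexH j0
      · exact heyH j0
      · exact heyH j1
      · exact hexH j1
    · intro i; fin_cases i
      · exact ⟨hxex j0, hzex j0⟩
      · exact ⟨hzey j0, hyey j0⟩
      · exact ⟨hyey j1, hzey j1⟩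
      · exact ⟨hzex j1, hxex j1⟩
end

section
/- Let a, b, s, p, t be integers with 2 ≤ s < a ≤ b, p ≥ s, and t ≥ (a+b-2)·C(s,2) + (a+b-1)^s·p, where C(s,2) = s(s-1)/2. Let ℋ be an (a+b)-uniform linear hypergraph on a finite vertex set that does not contain a Berge-K_{s,p}. Let G be any graph obtained by placing a copy of K_{a,b} into every hyperedge of ℋ. Then G is K_{s,t}-free. -/
open SimpleGraph

/-- A hypergraph `H` contains a Berge-`K_{s,p}`: disjoint vertex sets `S`, `P` with
`|S| = s`, `|P| = p`, and pairwise distinct hyperedges `f u v ∈ H` (one for each pair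
`u ∈ S`, `v ∈ P`) with `u, v ∈ f u v`. -/
def HasBergeKst {V : Type*} (H : Set (Finset V)) (s p : ℕ) : Prop :=
  ∃ (S P : Finset V) (f : V → V → Finset V),
    S.card = s ∧ P.card = p ∧ Disjoint S P ∧
    (∀ u ∈ S, ∀ v ∈ P, f u v ∈ H ∧ u ∈ f u v ∧ v ∈ f u v) ∧
    (∀ u ∈ S, ∀ v ∈ P, ∀ u' ∈ S, ∀ v' ∈ P, (u, v) ≠ (u', v') → f u v ≠ f u' v')

/-- let `2 ≤ s < a ≤ b`, `p ≥ s`, `t ≥ (a+b-2)·C(s,2) + (a+b-1)^s·p`, and let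
`H` be an `(a+b)`-uniform linear hypergraph containing no Berge-`K_{s,p}`. If `G` is obtained
by placing a copy of `K_{a,b}` into every hyperedge of `H`, then `G` is `K_{s,t}`-free. -/
theorem stmt16 {V : Type*} [Fintype V] [DecidableEq V] (a b s p t : ℕ)
    (hs : 2 ≤ s) (hsa : s < a) (hab : a ≤ b) (hp : s ≤ p)
    (ht : (a + b - 2) * Nat.choose s 2 + (a + b - 1) ^ s * p ≤ t)
    (H : Set (Finset V)) (huniform : ∀ h ∈ H, h.card = a + b)
    (hlinear : ∀ h₁ ∈ H, ∀ h₂ ∈ H, h₁ ≠ h₂ → (h₁ ∩ h₂).card ≤ 1)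
    (hBerge : ¬ HasBergeKst H s p)
    (A B : Finset V → Finset V)
    (hpart : ∀ h ∈ H, A h ∪ B h = h ∧ Disjoint (A h) (B h) ∧
      (A h).card = a ∧ (B h).card = b)
    (G : SimpleGraph V)
    (hG : ∀ u v, G.Adj u v ↔ ∃ h ∈ H, (u ∈ A h ∧ v ∈ B h) ∨ (v ∈ A h ∧ u ∈ B h)) :
    ¬ ContainsCopy (Kbip s t) G := by
  classical
  rintro ⟨f, hf⟩
  -- the two sides of the K_{s,t}
  set S : Finset V := Finset.univ.image (fun i : Fin s => f (Sum.inl i)) with hSdef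
  set T : Finset V := Finset.univ.image (fun j : Fin t => f (Sum.inr j)) with hTdef
  have hScard : S.card = s := by
    rw [hSdef, Finset.card_image_of_injective _ (fun i j h => by
      have := hf h; simpa using this)]
    simp
  have hTcard : T.card = t := by
    rw [hTdef, Finset.card_image_of_injective _ (fun i j h => by
      have := hf h; simpa using this)]
    simp
  have hST : Disjoint S T := by
    rw [Finset.disjoint_left]
    rintro x hx hx'
    simp only [hSdef, hTdef, Finset.mem_image, Finset.mem_univ, true_and] at hx hx'
    obtain ⟨i, hi⟩ := hx; obtain ⟨j, hj⟩ := hx'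
    have : Sum.inl i = Sum.inr j := hf (hi.trans hj.symm)
    simp at this
  have hadj : ∀ u ∈ S, ∀ v ∈ T, G.Adj u v := by
    intro u hu v hv
    simp only [hSdef, hTdef, Finset.mem_image, Finset.mem_univ, true_and] at hu hv
    obtain ⟨i, hi⟩ := hu; obtain ⟨j, hj⟩ := hv
    subst hi; subst hj
    exact f.map_adj (by simp [Kbip])
  -- choice of hyperedge for each adjacent pair
  have hchoice : ∀ u v, G.Adj u v → ∃ h, h ∈ H ∧ u ∈ h ∧ v ∈ h := by
    intro u v huv
    rw [hG] at huv
    obtain ⟨h, hh, hcase⟩ := huv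
    obtain ⟨hAB, -, -, -⟩ := hpart h hh
    refine ⟨h, hh, ?_, ?_⟩ <;> rcases hcase with ⟨h1, h2⟩ | ⟨h1, h2⟩ <;>
      rw [← hAB] <;> simp [h1, h2]
  set e : V → V → Finset V := fun u v =>
    if huv : G.Adj u v then (hchoice u v huv).choose else ∅ with hedef
  have he : ∀ u v, G.Adj u v → e u v ∈ H ∧ u ∈ e u v ∧ v ∈ e u v := by
    intro u v huv
    rw [hedef]
    simp only [dif_pos huv]
    exact (hchoice u v huv).choose_spec
  -- bad vertices of T
  set Bad : Finset V := T.filter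
    (fun v => ∃ h ∈ H, v ∈ h ∧ ∃ u ∈ S, ∃ u' ∈ S, u ≠ u' ∧ u ∈ h ∧ u' ∈ h) with hBaddef
  have hBadT : Bad ⊆ T := Finset.filter_subset _ _
  -- bound on the number of bad vertices
  have hBadcard : Bad.card ≤ Nat.choose s 2 * (a + b - 2) := by
    have hbadspec : ∀ v ∈ Bad, ∃ h ∈ H, v ∈ h ∧
        ∃ u ∈ S, ∃ u' ∈ S, u ≠ u' ∧ u ∈ h ∧ u' ∈ h := by
      intro v hv
      exact (Finset.mem_filter.mp hv).2
    set gB : V → Finset V := fun v =>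
      if hv : ∃ h ∈ H, v ∈ h ∧ ∃ u ∈ S, ∃ u' ∈ S, u ≠ u' ∧ u ∈ h ∧ u' ∈ h then
        hv.choose else ∅ with hgBdef
    have hgB : ∀ v ∈ Bad, gB v ∈ H ∧ v ∈ gB v ∧
        ∃ u ∈ S, ∃ u' ∈ S, u ≠ u' ∧ u ∈ gB v ∧ u' ∈ gB v := by
      intro v hv
      have hv' := hbadspec v hv
      rw [hgBdef]
      simp only [dif_pos hv']
      exact hv'.choose_spec
    -- every image hyperedge contains a 2-subset of S
    have hQ : ∀ h ∈ Bad.image gB, h ∈ H ∧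
        ∃ w : Finset V, w.card = 2 ∧ w ⊆ S ∧ w ⊆ h := by
      intro h hh
      obtain ⟨v, hv, rfl⟩ := Finset.mem_image.mp hh
      obtain ⟨h1, -, u, hu, u', hu', huu', huh, hu'h⟩ := hgB v hv
      exact ⟨h1, {u, u'}, Finset.card_pair huu',
        by intro x hx; rcases Finset.mem_insert.mp hx with rfl | hx
           · exact hu
           · exact (Finset.mem_singleton.mp hx) ▸ hu',
        by intro x hx; rcases Finset.mem_insert.mp hx with rfl | hx
           · exact huh
           · exact (Finset.mem_singleton.mp hx) ▸ hu'h⟩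
    set q : Finset V → Finset V := fun h =>
      if hh : ∃ w : Finset V, w.card = 2 ∧ w ⊆ S ∧ w ⊆ h then hh.choose else ∅ with hqdef
    have hq : ∀ h ∈ Bad.image gB, (q h).card = 2 ∧ q h ⊆ S ∧ q h ⊆ h := by
      intro h hh
      have hh' := (hQ h hh).2
      rw [hqdef]
      simp only [dif_pos hh']
      exact hh'.choose_spec
    have himgcard : (Bad.image gB).card ≤ Nat.choose s 2 := by
      have : (Bad.image gB).card ≤ (S.powersetCard 2).card := by
        apply Finset.card_le_card_of_injOn q
        · intro h hh
          obtain ⟨h1, h2, -⟩ := hq h hh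
          exact Finset.mem_powersetCard.mpr ⟨h2, h1⟩
        · intro h1 hh1 h2 hh2 heq
          by_contra hne
          obtain ⟨hc1, -, hsub1⟩ := hq h1 hh1
          obtain ⟨-, -, hsub2⟩ := hq h2 hh2
          have hsub : q h1 ⊆ h1 ∩ h2 := by
            intro x hx
            exact Finset.mem_inter.mpr ⟨hsub1 hx, hsub2 (heq ▸ hx)⟩
          have := Finset.card_le_card hsub
          have := hlinear h1 (hQ h1 hh1).1 h2 (hQ h2 hh2).1 hne
          omega
      rwa [Finset.card_powersetCard, hScard] at this
    have hcover : Bad ⊆ (Bad.image gB).biUnion (fun h => h \ S) := by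
      intro v hv
      obtain ⟨-, hvh, -⟩ := hgB v hv
      refine Finset.mem_biUnion.mpr ⟨gB v, Finset.mem_image_of_mem _ hv, ?_⟩
      exact Finset.mem_sdiff.mpr ⟨hvh, fun hvS => (Finset.disjoint_left.mp hST hvS (hBadT hv))⟩
    calc Bad.card ≤ ((Bad.image gB).biUnion (fun h => h \ S)).card :=
          Finset.card_le_card hcover
      _ ≤ ∑ h ∈ Bad.image gB, (h \ S).card := Finset.card_biUnion_le
      _ ≤ (Bad.image gB).card * (a + b - 2) := by
          rw [← smul_eq_mul]
          apply Finset.sum_le_card_nsmul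
          intro h hh
          obtain ⟨hH, w, hw2, hwS, hwh⟩ := hQ h hh
          have h1 : w ⊆ h ∩ S := fun x hx => Finset.mem_inter.mpr ⟨hwh hx, hwS hx⟩
          have h2 : 2 ≤ (h ∩ S).card := hw2 ▸ Finset.card_le_card h1
          have h3 : (h \ S).card = h.card - (h ∩ S).card := by
            rw [← Finset.sdiff_inter_self_left h S]
            exact Finset.card_sdiff_of_subset Finset.inter_subset_left
          have h4 := huniform h hH
          omega
      _ ≤ Nat.choose s 2 * (a + b - 2) := Nat.mul_le_mul_right _ himgcard
  -- good vertices
  set T' : Finset V := T \ Bad with hT'def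
  have hT'card : s * (a + b) * p ≤ T'.card := by
    have h1 : T'.card = t - Bad.card := by
      rw [hT'def, Finset.card_sdiff_of_subset hBadT, hTcard]
    have h2 : s * (a + b) ≤ (a + b - 1) ^ s := by
      have hb1 : 1 ≤ a + b - 1 := by omega
      have h3 : (a + b - 1) ^ 2 ≤ (a + b - 1) ^ s := Nat.pow_le_pow_right hb1 hs
      have h4 : s * (a + b) ≤ (a + b - 1) ^ 2 := by
        have hd : 2 * s + 1 ≤ a + b - 1 := by omega
        have : (a + b - 1) ^ 2 = (a + b - 1) * (a + b - 1) := sq (a + b - 1) ▸ rfl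
        nlinarith [Nat.sub_add_cancel (show 1 ≤ a + b by omega)]
      omega
    have h5 : s * (a + b) * p ≤ (a + b - 1) ^ s * p := Nat.mul_le_mul_right _ h2
    have h6 : Nat.choose s 2 * (a + b - 2) = (a + b - 2) * Nat.choose s 2 := Nat.mul_comm _ _
    omega
  -- greedy selection of p good vertices with pairwise distinct hyperedges
  have hT'T : T' ⊆ T := Finset.sdiff_subset
  have key : ∀ k : ℕ, ∀ T'' : Finset V, T'' ⊆ T' → s * (a + b) * k ≤ T''.card →
      ∃ P : Finset V, P ⊆ T'' ∧ P.card = k ∧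
        ∀ v1 ∈ P, ∀ v2 ∈ P, v1 ≠ v2 → ∀ u ∈ S, ∀ u' ∈ S, e u v1 ≠ e u' v2 := by
    intro k
    induction k with
    | zero => exact fun T'' _ _ => ⟨∅, by simp⟩
    | succ k ih =>
      intro T'' hsub hcard
      have hC : 0 < s * (a + b) := Nat.mul_pos (by omega) (by omega)
      have hpos : 0 < T''.card :=
        lt_of_lt_of_le hC (le_trans (Nat.le_mul_of_pos_right _ (by omega)) hcard)
      obtain ⟨v, hv⟩ := Finset.card_pos.mp hpos
      have hvT : v ∈ T := hT'T (hsub hv)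
      set F : Finset V := S.biUnion (fun u => e u v) with hFdef
      have hFcard : F.card ≤ s * (a + b) := by
        calc F.card ≤ ∑ u ∈ S, (e u v).card := Finset.card_biUnion_le
          _ ≤ S.card * (a + b) := by
              rw [← smul_eq_mul]
              apply Finset.sum_le_card_nsmul
              intro u hu
              have hu' := (he u v (hadj u hu v hvT)).1
              exact le_of_eq (huniform _ hu')
          _ = s * (a + b) := by rw [hScard]
      have hcard' : s * (a + b) * k ≤ (T'' \ F).card := by
        have h1 : T''.card - F.card ≤ (T'' \ F).card := Finset.le_card_sdiff F T''
        have h2 : s * (a + b) * (k + 1) = s * (a + b) * k + s * (a + b) := by ring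
        omega
      obtain ⟨P', hP'sub, hP'card, hP'prop⟩ :=
        ih (T'' \ F) ((Finset.sdiff_subset).trans hsub) hcard'
      have hvS : S.Nonempty := by
        rw [← Finset.card_pos, hScard]; omega
      obtain ⟨u0, hu0⟩ := hvS
      have hvF : v ∈ F := Finset.mem_biUnion.mpr ⟨u0, hu0, (he u0 v (hadj u0 hu0 v hvT)).2.2⟩
      have hvP' : v ∉ P' := fun hvP' => (Finset.mem_sdiff.mp (hP'sub hvP')).2 hvF
      refine ⟨insert v P', ?_, ?_, ?_⟩
      · intro x hx
        rcases Finset.mem_insert.mp hx with rfl | hx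
        · exact hv
        · exact ((Finset.sdiff_subset).trans (fun y hy => hy)) (hP'sub hx)
      · rw [Finset.card_insert_of_notMem hvP', hP'card]
      · intro v1 hv1 v2 hv2 hne u hu u' hu'
        rcases Finset.mem_insert.mp hv1 with h1 | h1 <;>
          rcases Finset.mem_insert.mp hv2 with h2 | h2
        · exact absurd (h1.trans h2.symm) hne
        · -- v1 = v, v2 ∈ P'
          intro heq
          have hv2T : v2 ∈ T := hT'T (hsub ((Finset.sdiff_subset) (hP'sub h2)))
          have hv2mem : v2 ∈ e u' v2 := (he u' v2 (hadj u' hu' v2 hv2T)).2.2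
          have hv2F : v2 ∉ F := (Finset.mem_sdiff.mp (hP'sub h2)).2
          refine hv2F (Finset.mem_biUnion.mpr ⟨u, hu, ?_⟩)
          rw [h1] at heq
          rw [heq]
          exact hv2mem
        · -- v1 ∈ P', v2 = v
          intro heq
          have hv1T : v1 ∈ T := hT'T (hsub ((Finset.sdiff_subset) (hP'sub h1)))
          have hv1mem : v1 ∈ e u v1 := (he u v1 (hadj u hu v1 hv1T)).2.2
          have hv1F : v1 ∉ F := (Finset.mem_sdiff.mp (hP'sub h1)).2
          refine hv1F (Finset.mem_biUnion.mpr ⟨u', hu', ?_⟩)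
          rw [h2] at heq
          rw [← heq]
          exact hv1mem
        · exact hP'prop v1 h1 v2 h2 hne u hu u' hu'
  obtain ⟨P, hPsub, hPcard, hPprop⟩ := key p T' (fun x hx => hx) hT'card
  have hPT : P ⊆ T := fun x hx => hT'T (hPsub hx)
  -- build the Berge-K_{s,p}
  apply hBerge
  refine ⟨S, P, e, hScard, hPcard, ?_, ?_, ?_⟩
  · exact Finset.disjoint_of_subset_right hPT hST
  · intro u hu v hv
    exact he u v (hadj u hu v (hPT hv))
  · intro u hu v hv u' hu' v' hv' hneq heq
    by_cases hvv : v = v'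
    · subst hvv
      have huu : u ≠ u' := fun h => hneq (by rw [h])
      -- then v would be bad
      have hvBad : v ∈ Bad := by
        rw [hBaddef, Finset.mem_filter]
        refine ⟨hPT hv, e u v, (he u v (hadj u hu v (hPT hv))).1,
          (he u v (hadj u hu v (hPT hv))).2.2, u, hu, u', hu', huu,
          (he u v (hadj u hu v (hPT hv))).2.1, ?_⟩
        rw [heq]
        exact (he u' v (hadj u' hu' v (hPT hv'))).2.1
      exact (Finset.mem_sdiff.mp (hPsub hv)).2 hvBad
    · exact hPprop v hv v' hv' hvv u hu u' hu' heq
end
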